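/- Every mixed door, in every planar embedding, can planarly simulate some fully directed door that is not the Case-8 OTtocC door: a directed tunnel of the door simulates a diode, and wiring each undirected tunnel through diodes at both ends yields a fully directed door; if the result would be the OTtocC door, flipping the pair of diodes on one undirected tunnel yields a different fully directed door. -/

import Mathlib

/-- Planar-gadget data on state type `St` and location type `Lc`: a set of traversals
together with a cyclic order of the locations, given as a list (up to rotation and
reflection) containing each location exactly once. -/
structure PGData (St Lc : Type) where
  trav : (St × Lc) → (St × Lc) → Prop
  cyc : List Lc
  cyc_nodup : cyc.Nodup
  cyc_complete : ∀ l, l ∈ cyc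

/-- A planar gadget: finite state and location sets plus planar gadget data. -/
structure PlanarGadget where
  State : Type
  Loc : Type
  stateFin : Fintype State
  locFin : Fintype Loc
  data : PGData State Loc

/-- Make a planar gadget from its data. -/
def mkPG {St Lc : Type} [Fintype St] [Fintype Lc] (d : PGData St Lc) : PlanarGadget :=
  ⟨St, Lc, inferInstance, inferInstance, d⟩

open Classical in
/-- Update the state of one gadget instance in a global state. -/
noncomputable def updState {ι St : Type} (σg : ι → St) (i : ι) (s : St) : ι → St :=
  fun j => if j = i then s else σg j

/-- The cyclic successor of `a` in the list `L`. -/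
noncomputable def cycNext {α : Type} (L : List α) (a : α) : α :=
  letI := Classical.decEq α
  L.getD ((L.idxOf a + 1) % L.length) a

/-- Number of orbits of the function `f` (the equivalence closure of `f x = y`). -/
noncomputable def orbCount {D : Type} (f : D → D) : ℕ :=
  Nat.card (Quotient (⟨Relation.EqvGen fun x y => f x = y,
    Relation.EqvGen.is_equivalence _⟩ : Setoid D))

/-- Number of joint orbits of two functions `f`, `g`. -/
noncomputable def orbCount2 {D : Type} (f g : D → D) : ℕ :=
  Nat.card (Quotient (⟨Relation.EqvGen fun x y => f x = y ∨ g x = y,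
    Relation.EqvGen.is_equivalence _⟩ : Setoid D))
/-- A system of copies of gadgets from the family `fam` (all on the same state and
location types), drawn in the plane, presented as a combinatorial map:
* a finite set `ι` of gadget instances (instance `i` being a copy of `fam (kind i)`) and
  a finite set `J` of junction vertices (points where connections meet freely);
* a finite set `D` of darts with a rotation permutation `σ` and a fixed-point-free edge
  involution `τ` (each connection contributes a pair of darts swapped by `τ`);
* every location of every instance carries exactly one dart, the rotation at an instance
  follows the gadget's cyclic order of locations, and the rotation at a junction is a
  single (arbitrary) cycle on its darts. -/
structure MSystem {St Lc κ : Type} (fam : κ → PGData St Lc) where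
  ι : Type
  instFin : Fintype ι
  kind : ι → κ
  J : Type
  juncFin : Fintype J
  D : Type
  dartFin : Fintype D
  σ : Equiv.Perm D
  τ : Equiv.Perm D
  τ_invol : ∀ d, τ (τ d) = d
  τ_nofix : ∀ d, τ d ≠ d
  vert : D → ι ⊕ J
  port : D → Lc
  port_unique : ∀ (i : ι) (l : Lc), ∃! d : D, vert d = Sum.inl i ∧ port d = l
  σ_vert : ∀ d, vert (σ d) = vert d
  σ_port : ∀ (d : D) (i : ι), vert d = Sum.inl i →
    port (σ d) = cycNext (fam (kind i)).cyc (port d)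
  σ_junc : ∀ (d d' : D) (j : J), vert d = Sum.inr j → vert d' = Sum.inr j →
    Relation.EqvGen (fun x y => σ x = y) d d'

namespace MSystem

variable {St Lc κ : Type} {fam : κ → PGData St Lc}

/-- The position (instance-location or junction) at which a dart is attached. -/
def endpt (S : MSystem fam) (d : S.D) : (S.ι × Lc) ⊕ S.J :=
  match S.vert d with
  | Sum.inl i => Sum.inl (i, S.port d)
  | Sum.inr j => Sum.inr j

/-- The face permutation of the combinatorial map. -/
def facePerm (S : MSystem fam) : S.D → S.D := fun d => S.σ (S.τ d)

/-- Planarity of the combinatorial map, via the Euler characteristic: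
`V + F = E + 2 C` (vertices + faces = edges + 2 · connected components). -/
def IsPlanar (S : MSystem fam) : Prop :=
  orbCount (fun d => S.σ d) + orbCount S.facePerm =
    orbCount (fun d => S.τ d) + 2 * orbCount2 (fun d => S.σ d) (fun d => S.τ d)

/-- `d` is the dart at the instance-location `x`. -/
def IsDartAt (S : MSystem fam) (x : S.ι × Lc) (d : S.D) : Prop :=
  S.vert d = Sum.inl x.1 ∧ S.port d = x.2

end MSystem

/-- A single move of the agent in a planar system: a traversal inside one instance
(changing only that instance's state), or a free move along a connection (an edge of
the map, between the endpoints of a dart and its `τ`-partner). -/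
inductive MStep {St Lc κ : Type} (fam : κ → PGData St Lc) (S : MSystem fam) :
    ((S.ι → St) × ((S.ι × Lc) ⊕ S.J)) → ((S.ι → St) × ((S.ι × Lc) ⊕ S.J)) → Prop
  | trav {σg : S.ι → St} {i : S.ι} {a b : Lc} {s' : St} :
      (fam (S.kind i)).trav (σg i, a) (s', b) →
      MStep fam S (σg, Sum.inl (i, a)) (updState σg i s', Sum.inl (i, b))
  | wire {σg : S.ι → St} (d : S.D) :
      MStep fam S (σg, S.endpt d) (σg, S.endpt (S.τ d))

/-- The planar system `S`, with external locations `ext` and state encoding `enc`,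
is a planar simulation of the planar gadget `H`:
* `ext` identifies the locations of `H` injectively with instance-locations of `S` and
  `enc` encodes the states of `H` injectively as global states of `S`;
* the underlying combinatorial map is planar;
* the reachability behavior between external locations in encoded global states is
  exactly the transitive closure of `H`;
* all external locations lie on one common face of the map, and the cyclic order in
  which that face visits them is the cyclic order of the locations of `H`
  (up to rotation and reflection). -/
def IsPlanarSimulation {St Lc κ : Type} (fam : κ → PGData St Lc) (H : PlanarGadget)
    (S : MSystem fam) (ext : H.Loc → S.ι × Lc) (enc : H.State → (S.ι → St)) : Prop :=
  Function.Injective ext ∧ Function.Injective enc ∧ S.IsPlanar ∧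
  (∀ s s' a b,
      Relation.ReflTransGen (MStep fam S) (enc s, Sum.inl (ext a)) (enc s', Sum.inl (ext b)) ↔
      Relation.ReflTransGen H.data.trav (s, a) (s', b)) ∧
  (∃ r : Bool, ∀ (a : H.Loc) (da db : S.D),
      S.IsDartAt (ext a) da →
      S.IsDartAt (ext (cycNext (if r then H.data.cyc else H.data.cyc.reverse) a)) db →
      ∃ k, 0 < k ∧ S.facePerm^[k] da = db ∧
        ∀ j, 0 < j → j < k → ∀ c, ¬ S.IsDartAt (ext c) (S.facePerm^[j] da))

/-- The family `fam` of planar gadgets can planarly simulate the planar gadget `H`. -/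
def PlanarlySimulatesFam {St Lc κ : Type} (fam : κ → PGData St Lc)
    (H : PlanarGadget) : Prop :=
  ∃ (S : MSystem fam) (ext : H.Loc → S.ι × Lc) (enc : H.State → (S.ι → St)),
    IsPlanarSimulation fam H S ext enc

/-- The planar gadget `G` can planarly simulate the planar gadget `H`. -/
def PlanarlySimulates (G H : PlanarGadget) : Prop :=
  PlanarlySimulatesFam (fun _ : Unit => G.data) H

/-! ### Gadgets.  For 2-state gadgets, state `true` = open, `false` = closed.
A direction flag `true` means the corresponding tunnel is directed. -/

/-- Locations of a door with an opening tunnel. -/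
inductive DoorLoc | O0 | O1 | T0 | T1 | C0 | C1
deriving DecidableEq

instance : Fintype DoorLoc := ⟨{DoorLoc.O0, DoorLoc.O1, DoorLoc.T0, DoorLoc.T1, DoorLoc.C0, DoorLoc.C1}, by intro x; cases x <;> decide⟩

/-- Traversals of a door with an opening tunnel; `dO`, `dT`, `dC` record whether the
opening, traverse, closing tunnels are directed. -/
def doorTrav (dO dT dC : Bool) : (Bool × DoorLoc) → (Bool × DoorLoc) → Prop := fun x y =>
  (x.2 = DoorLoc.O0 ∧ y = (true, DoorLoc.O1)) ∨
  (dO = false ∧ x.2 = DoorLoc.O1 ∧ y = (true, DoorLoc.O0)) ∨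
  (x.1 = true ∧ x.2 = DoorLoc.T0 ∧ y = (true, DoorLoc.T1)) ∨
  (dT = false ∧ x.1 = true ∧ x.2 = DoorLoc.T1 ∧ y = (true, DoorLoc.T0)) ∨
  (x.2 = DoorLoc.C0 ∧ y = (false, DoorLoc.C1)) ∨
  (dC = false ∧ x.2 = DoorLoc.C1 ∧ y = (false, DoorLoc.C0))

/-- Locations of an open-optional door (opening port `O`). -/
inductive ODoorLoc | O | T0 | T1 | C0 | C1
deriving DecidableEq

instance : Fintype ODoorLoc := ⟨{ODoorLoc.O, ODoorLoc.T0, ODoorLoc.T1, ODoorLoc.C0, ODoorLoc.C1}, by intro x; cases x <;> decide⟩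

/-- Traversals of an open-optional door: a visit to its opening port `O` sets the state
to open. -/
def openOptDoorTrav (dT dC : Bool) : (Bool × ODoorLoc) → (Bool × ODoorLoc) → Prop := fun x y =>
  (x.2 = ODoorLoc.O ∧ y = (true, ODoorLoc.O)) ∨
  (x.1 = true ∧ x.2 = ODoorLoc.T0 ∧ y = (true, ODoorLoc.T1)) ∨
  (dT = false ∧ x.1 = true ∧ x.2 = ODoorLoc.T1 ∧ y = (true, ODoorLoc.T0)) ∨
  (x.2 = ODoorLoc.C0 ∧ y = (false, ODoorLoc.C1)) ∨
  (dC = false ∧ x.2 = ODoorLoc.C1 ∧ y = (false, ODoorLoc.C0))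

/-- A diode: a 1-state gadget with one always-traversable directed tunnel. -/
inductive DiodeLoc | inp | out
deriving DecidableEq

instance : Fintype DiodeLoc := ⟨{DiodeLoc.inp, DiodeLoc.out}, by intro x; cases x <;> decide⟩

def pDiode : PlanarGadget :=
  mkPG (⟨fun x y => x.2 = DiodeLoc.inp ∧ y.2 = DiodeLoc.out,
    [DiodeLoc.inp, DiodeLoc.out], by decide, by decide⟩ : PGData Unit DiodeLoc)

/-- Locations of an open-required normal self-closing door. -/
inductive SCDLoc | O0 | O1 | T0 | T1
deriving DecidableEq

instance : Fintype SCDLoc := ⟨{SCDLoc.O0, SCDLoc.O1, SCDLoc.T0, SCDLoc.T1}, by intro x; cases x <;> decide⟩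

/-- Open-required normal self-closing door: opening tunnel `O` (always traversable, sets
the state open), self-closing tunnel `T` (traversable exactly when open, sets closed). -/
def nSCDTrav (dO dT : Bool) : (Bool × SCDLoc) → (Bool × SCDLoc) → Prop := fun x y =>
  (x.2 = SCDLoc.O0 ∧ y = (true, SCDLoc.O1)) ∨
  (dO = false ∧ x.2 = SCDLoc.O1 ∧ y = (true, SCDLoc.O0)) ∨
  (x.1 = true ∧ x.2 = SCDLoc.T0 ∧ y = (false, SCDLoc.T1)) ∨
  (dT = false ∧ x.1 = true ∧ x.2 = SCDLoc.T1 ∧ y = (false, SCDLoc.T0))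

/-- Locations of an open-optional normal self-closing door. -/
inductive OOSCDLoc | O | T0 | T1
deriving DecidableEq

instance : Fintype OOSCDLoc := ⟨{OOSCDLoc.O, OOSCDLoc.T0, OOSCDLoc.T1}, by intro x; cases x <;> decide⟩

/-- Open-optional normal self-closing door: opening port `O` (visit sets the state open),
self-closing tunnel `T` (traversable exactly when open, sets the state closed). -/
def ooSCDTrav (dT : Bool) : (Bool × OOSCDLoc) → (Bool × OOSCDLoc) → Prop := fun x y =>
  (x.2 = OOSCDLoc.O ∧ y = (true, OOSCDLoc.O)) ∨
  (x.1 = true ∧ x.2 = OOSCDLoc.T0 ∧ y = (false, OOSCDLoc.T1)) ∨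
  (dT = false ∧ x.1 = true ∧ x.2 = OOSCDLoc.T1 ∧ y = (false, OOSCDLoc.T0))

/-- The planar directed open-optional normal self-closing door (a 3-location gadget,
whose cyclic order is unique up to rotation and reflection). -/
def pSCD : PlanarGadget :=
  mkPG (⟨ooSCDTrav true, [OOSCDLoc.O, OOSCDLoc.T0, OOSCDLoc.T1],
    by decide, by decide⟩ : PGData Bool OOSCDLoc)

/-- Locations of a symmetric self-closing door. -/
inductive SymSCDLoc | A0 | A1 | B0 | B1
deriving DecidableEq

instance : Fintype SymSCDLoc := ⟨{SymSCDLoc.A0, SymSCDLoc.A1, SymSCDLoc.B0, SymSCDLoc.B1}, by intro x; cases x <;> decide⟩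

/-- Symmetric self-closing door: self-opening tunnel `A` (traversable exactly when
closed, sets open), self-closing tunnel `B` (traversable exactly when open, sets closed). -/
def symSCDTrav (dA dB : Bool) : (Bool × SymSCDLoc) → (Bool × SymSCDLoc) → Prop := fun x y =>
  (x.1 = false ∧ x.2 = SymSCDLoc.A0 ∧ y = (true, SymSCDLoc.A1)) ∨
  (dA = false ∧ x.1 = false ∧ x.2 = SymSCDLoc.A1 ∧ y = (true, SymSCDLoc.A0)) ∨
  (x.1 = true ∧ x.2 = SymSCDLoc.B0 ∧ y = (false, SymSCDLoc.B1)) ∨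
  (dB = false ∧ x.1 = true ∧ x.2 = SymSCDLoc.B1 ∧ y = (false, SymSCDLoc.B0))

/-- Locations of a crossover: tunnels `X0–X1` and `Y0–Y1`. -/
inductive XLoc | X0 | Y0 | X1 | Y1
deriving DecidableEq

instance : Fintype XLoc := ⟨{XLoc.X0, XLoc.Y0, XLoc.X1, XLoc.Y1}, by intro x; cases x <;> decide⟩

/-- The cyclic order of a crossover: the locations of its two tunnels alternate. -/
def crossCyc : List XLoc := [XLoc.X0, XLoc.Y0, XLoc.X1, XLoc.Y1]

/-- The directed crossover. -/
def pDirCrossover : PlanarGadget :=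
  mkPG (⟨fun x y => (x.2 = XLoc.X0 ∧ y.2 = XLoc.X1) ∨ (x.2 = XLoc.Y0 ∧ y.2 = XLoc.Y1),
    crossCyc, by decide, by decide⟩ : PGData Unit XLoc)

/-- The undirected crossover. -/
def pUndirCrossover : PlanarGadget :=
  mkPG (⟨fun x y =>
      (x.2 = XLoc.X0 ∧ y.2 = XLoc.X1) ∨ (x.2 = XLoc.X1 ∧ y.2 = XLoc.X0) ∨
      (x.2 = XLoc.Y0 ∧ y.2 = XLoc.Y1) ∨ (x.2 = XLoc.Y1 ∧ y.2 = XLoc.Y0),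
    crossCyc, by decide, by decide⟩ : PGData Unit XLoc)

/-- Locations of a tripwire lock: lock tunnel `L0→L1`, tripwire tunnel `W0→W1`. -/
inductive TWLoc | L0 | L1 | W0 | W1
deriving DecidableEq

instance : Fintype TWLoc := ⟨{TWLoc.L0, TWLoc.L1, TWLoc.W0, TWLoc.W1}, by intro x; cases x <;> decide⟩

/-- Traversals of the directed tripwire lock: the lock tunnel is traversable in exactly
one state (`true`) and does not change the state; the tripwire tunnel is always
traversable and toggles the state. -/
def twlTrav : (Bool × TWLoc) → (Bool × TWLoc) → Prop := fun x y =>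
  (x.1 = true ∧ x.2 = TWLoc.L0 ∧ y = (true, TWLoc.L1)) ∨
  (x.2 = TWLoc.W0 ∧ y = (!x.1, TWLoc.W1))

/-- The parallel directed tripwire lock: two non-crossing tunnels oriented the same way. -/
def parTWLData : PGData Bool TWLoc :=
  ⟨twlTrav, [TWLoc.L0, TWLoc.L1, TWLoc.W1, TWLoc.W0], by decide, by decide⟩

/-- The antiparallel directed tripwire lock: two non-crossing tunnels oriented oppositely. -/
def apTWLData : PGData Bool TWLoc :=
  ⟨twlTrav, [TWLoc.L0, TWLoc.L1, TWLoc.W0, TWLoc.W1], by decide, by decide⟩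

def parTWL : PlanarGadget := mkPG parTWLData
def apTWL : PlanarGadget := mkPG apTWLData

/-- Locations of a tripwire-lock-tripwire: tripwires `Wa0→Wa1` and `Wb0→Wb1` on the
outside and lock `L0→L1` between them. -/
inductive TLTLoc | Wa0 | Wa1 | L0 | L1 | Wb0 | Wb1
deriving DecidableEq

instance : Fintype TLTLoc := ⟨{TLTLoc.Wa0, TLTLoc.Wa1, TLTLoc.L0, TLTLoc.L1, TLTLoc.Wb0, TLTLoc.Wb1}, by intro x; cases x <;> decide⟩

/-- Traversals of the directed tripwire-lock-tripwire: both tripwires are always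
traversable and toggle the state; the lock is traversable exactly in state `true`
and does not change the state. -/
def tltTrav : (Bool × TLTLoc) → (Bool × TLTLoc) → Prop := fun x y =>
  (x.2 = TLTLoc.Wa0 ∧ y = (!x.1, TLTLoc.Wa1)) ∨
  (x.1 = true ∧ x.2 = TLTLoc.L0 ∧ y = (true, TLTLoc.L1)) ∨
  (x.2 = TLTLoc.Wb0 ∧ y = (!x.1, TLTLoc.Wb1))

/-- The directed tripwire-lock-tripwire with antiparallel tripwires: three non-crossing
tunnels, the two tripwires on the outside oriented oppositely, the lock in the middle. -/
def pTLT : PlanarGadget :=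
  mkPG (⟨tltTrav,
    [TLTLoc.Wa0, TLTLoc.Wa1, TLTLoc.L1, TLTLoc.Wb0, TLTLoc.Wb1, TLTLoc.L0],
    by decide, by decide⟩ : PGData Bool TLTLoc)

/-! ### The twelve planar fully directed doors without internal crossings,
named by the clockwise cyclic order of their locations, entrances uppercase and exits
lowercase (`O`/`o` opening, `T`/`t` traverse, `C`/`c` closing); opening tunnels with
adjacent endpoints are merged into a single opening port `O`. -/

/-- A fully directed door with an opening port, in a given planar embedding. -/
def portCaseDoor (c : List ODoorLoc) (h1 : c.Nodup) (h2 : ∀ l, l ∈ c) : PlanarGadget :=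
  mkPG (⟨openOptDoorTrav true true, c, h1, h2⟩ : PGData Bool ODoorLoc)

/-- A fully directed door with an opening tunnel, in a given planar embedding. -/
def tunnelCaseDoor (c : List DoorLoc) (h1 : c.Nodup) (h2 : ∀ l, l ∈ c) : PlanarGadget :=
  mkPG (⟨doorTrav true true true, c, h1, h2⟩ : PGData Bool DoorLoc)

/-- Case 1: the OcCTt door. -/
def case1Door : PlanarGadget :=
  portCaseDoor [ODoorLoc.O, ODoorLoc.C1, ODoorLoc.C0, ODoorLoc.T0, ODoorLoc.T1]
    (by decide) (by decide)

/-- Case 2: the OTtCc door. -/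
def case2Door : PlanarGadget :=
  portCaseDoor [ODoorLoc.O, ODoorLoc.T0, ODoorLoc.T1, ODoorLoc.C0, ODoorLoc.C1]
    (by decide) (by decide)

/-- Case 3: the OCcTt door. -/
def case3Door : PlanarGadget :=
  portCaseDoor [ODoorLoc.O, ODoorLoc.C0, ODoorLoc.C1, ODoorLoc.T0, ODoorLoc.T1]
    (by decide) (by decide)

/-- Case 4: the OTtcC door. -/
def case4Door : PlanarGadget :=
  portCaseDoor [ODoorLoc.O, ODoorLoc.T0, ODoorLoc.T1, ODoorLoc.C1, ODoorLoc.C0]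
    (by decide) (by decide)

/-- Case 5: the OtToCc door. -/
def case5Door : PlanarGadget :=
  tunnelCaseDoor [DoorLoc.O0, DoorLoc.T1, DoorLoc.T0, DoorLoc.O1, DoorLoc.C0, DoorLoc.C1]
    (by decide) (by decide)

/-- Case 6: the OTtoCc door. -/
def case6Door : PlanarGadget :=
  tunnelCaseDoor [DoorLoc.O0, DoorLoc.T0, DoorLoc.T1, DoorLoc.O1, DoorLoc.C0, DoorLoc.C1]
    (by decide) (by decide)

/-- Case 7: the OtTocC door. -/
def case7Door : PlanarGadget :=
  tunnelCaseDoor [DoorLoc.O0, DoorLoc.T1, DoorLoc.T0, DoorLoc.O1, DoorLoc.C1, DoorLoc.C0]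
    (by decide) (by decide)

/-- The cyclic order of the Case-8 OTtocC door. -/
def case8Cyc : List DoorLoc :=
  [DoorLoc.O0, DoorLoc.T0, DoorLoc.T1, DoorLoc.O1, DoorLoc.C1, DoorLoc.C0]

/-- Case 8: the OTtocC door. -/
def case8Door : PlanarGadget := tunnelCaseDoor case8Cyc (by decide) (by decide)

/-- Case 9: the OtcCT door. -/
def case9Door : PlanarGadget :=
  portCaseDoor [ODoorLoc.O, ODoorLoc.T1, ODoorLoc.C1, ODoorLoc.C0, ODoorLoc.T0]
    (by decide) (by decide)

/-- Case 10: the OTcCt door. -/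
def case10Door : PlanarGadget :=
  portCaseDoor [ODoorLoc.O, ODoorLoc.T0, ODoorLoc.C1, ODoorLoc.C0, ODoorLoc.T1]
    (by decide) (by decide)

/-- Case 11: the OCTtc door. -/
def case11Door : PlanarGadget :=
  portCaseDoor [ODoorLoc.O, ODoorLoc.C0, ODoorLoc.T0, ODoorLoc.T1, ODoorLoc.C1]
    (by decide) (by decide)

/-- Case 12: the OcTtC door. -/
def case12Door : PlanarGadget :=
  portCaseDoor [ODoorLoc.O, ODoorLoc.C1, ODoorLoc.T0, ODoorLoc.T1, ODoorLoc.C0]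
    (by decide) (by decide)

/-- Two lists are equal as cyclic orders (up to rotation and reflection). -/
def CycEquiv {α : Type} (L M : List α) : Prop :=
  ∃ n : ℕ, M = L.rotate n ∨ M = L.reverse.rotate n

/-- In the cyclic order `c`, the pair `{a, a'}` interleaves with the pair `{b, b'}`
(i.e. the tunnel `a–a'` crosses the tunnel `b–b'` in any planar drawing). -/
def Interleaved {α : Type} (c : List α) (a a' b b' : α) : Prop :=
  letI := Classical.decEq α
  ∃ n : ℕ,
    (c.rotate n).idxOf a = 0 ∧
    (((c.rotate n).idxOf b < (c.rotate n).idxOf a' ∧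
      (c.rotate n).idxOf a' < (c.rotate n).idxOf b') ∨
     ((c.rotate n).idxOf b' < (c.rotate n).idxOf a' ∧
      (c.rotate n).idxOf a' < (c.rotate n).idxOf b))

/-!
Fix a directed tunnel `u` of the mixed door. A copy of the door whose state keeps `u`
traversable (closed if `u` is the closing tunnel, open otherwise) is a diode along `u`, and
the agent can never reach its other tunnels. Wire every location of a central copy of the door
to the inner end of such a diode hanging outside it, oriented so that entrance locations can
only be entered and exit locations only be left. An agent can then only enter the central door
at an entrance, walk inside one tunnel, and leave at an exit: exactly the traversals of the
fully directed door. The diodes lie in the outer face, which visits their outer ends in the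
cyclic order of the central door.

If that order is the Case-8 one, pick an undirected tunnel `t` and attach the diodes of its two
ends the other way round. Since `t` is undirected this still simulates the directed door, now
with the two ends of `t` exchanged in the cyclic order, and no such exchange maps the Case-8
order to itself.
-/

section Orbits

variable {D : Type}

lemma nat_card_quotient_eqvGen_eq {L : Type} (r : D → D → Prop) (g : D → L) (s : L → D)
    (hg : ∀ x y, r x y → g x = g y) (hs : ∀ i, g (s i) = i)
    (hconn : ∀ d, Relation.EqvGen r (s (g d)) d) :
    Nat.card (Quotient (⟨Relation.EqvGen r, Relation.EqvGen.is_equivalence r⟩ : Setoid D)) =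
      Nat.card L := by
  have hresp : ∀ x y, Relation.EqvGen r x y → g x = g y := by
    intro x y h
    induction h with
    | rel x y h => exact hg x y h
    | refl => rfl
    | symm _ _ _ ih => exact ih.symm
    | trans _ _ _ _ _ ih₁ ih₂ => exact ih₁.trans ih₂
  exact Nat.card_congr
    { toFun := Quotient.lift g hresp
      invFun := fun i => Quotient.mk _ (s i)
      left_inv := fun q => Quotient.inductionOn q fun d => Quotient.sound (hconn d)
      right_inv := hs }

lemma orbCount_eq_nat_card {L : Type} (f : D → D) (g : D → L) (s : L → D)
    (hg : ∀ x, g (f x) = g x) (hs : ∀ i, g (s i) = i)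
    (hconn : ∀ d, Relation.EqvGen (fun x y => f x = y) (s (g d)) d) :
    orbCount f = Nat.card L :=
  nat_card_quotient_eqvGen_eq _ g s (by rintro x _ rfl; exact (hg x).symm) hs hconn

lemma orbCount2_eq_nat_card {L : Type} (f f' : D → D) (g : D → L) (s : L → D)
    (hg : ∀ x, g (f x) = g x) (hg' : ∀ x, g (f' x) = g x) (hs : ∀ i, g (s i) = i)
    (hconn : ∀ d, Relation.EqvGen (fun x y => f x = y ∨ f' x = y) (s (g d)) d) :
    orbCount2 f f' = Nat.card L :=
  nat_card_quotient_eqvGen_eq _ g s (by rintro x _ (rfl | rfl) <;> simp [hg, hg']) hs hconn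

lemma eqvGen_or_of_eqvGen_comp {f f' : D → D} {x y : D}
    (h : Relation.EqvGen (fun a b => f (f' a) = b) x y) :
    Relation.EqvGen (fun a b => f a = b ∨ f' a = b) x y := by
  induction h with
  | rel a b hab => exact .trans _ _ _ (.rel _ _ (.inr rfl)) (.rel _ _ (.inl hab))
  | refl a => exact .refl a
  | symm a b _ ih => exact ih.symm
  | trans a b c _ _ ih₁ ih₂ => exact ih₁.trans _ _ _ ih₂

lemma eqvGen_iterate {r : D → D → Prop} {f : D → D} (hf : ∀ x, r x (f x)) (x : D)
    (k : ℕ) :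
    Relation.EqvGen r x (f^[k] x) := by
  induction k with
  | zero => exact .refl x
  | succ k ih => exact ih.trans _ _ _ (Function.iterate_succ_apply' f k x ▸ .rel _ _ (hf _))

end Orbits

section CyclicOrder

open Fin.NatCast

variable {α : Type} {n : ℕ}

def cycSucc (e : Fin (n + 1) ≃ α) : Equiv.Perm α := e.permCongr (Equiv.addRight 1)

lemma cycSucc_apply (e : Fin (n + 1) ≃ α) (a : α) : cycSucc e a = e (e.symm a + 1) := rfl

lemma cycSucc_iterate (e : Fin (n + 1) ≃ α) (k : ℕ) (a : α) :
    (cycSucc e)^[k] a = e (e.symm a + k) := by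
  induction k with
  | zero => simp
  | succ k ih =>
    rw [Function.iterate_succ_apply', ih, cycSucc_apply, Equiv.symm_apply_apply, Nat.cast_succ,
      add_assoc]

lemma cycSucc_iterate_eq_iterate_iff (e : Fin (n + 1) ≃ α) (i j : ℕ) (a : α) :
    (cycSucc e)^[i] a = (cycSucc e)^[j] a ↔ i % (n + 1) = j % (n + 1) := by
  rw [cycSucc_iterate, cycSucc_iterate, e.apply_eq_iff_eq, add_right_inj, Fin.ext_iff]
  simp [Fin.val_natCast]

lemma cycSucc_iterate_ne_self (e : Fin (n + 1) ≃ α) {k : ℕ} (hk₀ : 0 < k) (hk : k < n + 1)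
    (a : α) : (cycSucc e)^[k] a ≠ a := by
  intro h
  have := (cycSucc_iterate_eq_iterate_iff e k 0 a).1 h
  rw [Nat.mod_eq_of_lt hk, Nat.zero_mod] at this
  omega

lemma cycSucc_iterate_period (e : Fin (n + 1) ≃ α) (a : α) : (cycSucc e)^[n + 1] a = a :=
  (cycSucc_iterate_eq_iterate_iff e (n + 1) 0 a).2 (by simp)

lemma exists_cycSucc_iterate_succ_eq (e : Fin (n + 1) ≃ α) (a b : α) :
    ∃ k ≤ n, (cycSucc e)^[k + 1] a = b := by
  refine ⟨(e.symm b - e.symm a - 1 : Fin (n + 1)), Fin.is_le _, ?_⟩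
  rw [cycSucc_iterate, Nat.cast_succ, Fin.cast_val_eq_self]
  simp

lemma exists_equiv_cycNext [Fintype α] (hcard : Fintype.card α = n + 1) (L : List α)
    (hnd : L.Nodup) (hL : ∀ a, a ∈ L) :
    ∃ e : Fin (n + 1) ≃ α, ∀ a, cycNext L a = cycSucc e a := by
  classical
  have hlen : L.length = n + 1 := by
    rw [← hcard, ← Fintype.card_fin L.length]
    exact Fintype.card_congr (hnd.getEquivOfForallMemList L hL)
  refine ⟨(finCongr hlen).symm.trans (hnd.getEquivOfForallMemList L hL), fun a => ?_⟩
  have hlt : (L.idxOf a + 1) % (n + 1) < L.length := by rw [hlen]; exact Nat.mod_lt _ n.succ_pos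
  simp [cycNext, cycSucc_apply, Fin.val_add, hlen, List.getElem?_eq_getElem hlt]

lemma cycNext_map {β : Type} {f : α → β} (hf : Function.Injective f) (L : List α) (a : α) :
    cycNext (L.map f) (f a) = f (cycNext L a) := by
  unfold cycNext
  rw [List.length_map, ← List.getD_map (f := f)]
  congr 3
  simp only [List.idxOf, List.findIdx_map]
  congr 1
  funext x
  simp [hf.eq_iff]

def cycClass (L : List α) : List (List α) :=
  (List.range L.length).flatMap fun n => [L.rotate n, L.reverse.rotate n]

lemma CycEquiv.mem_cycClass {L M : List α} (hL : L ≠ []) (h : CycEquiv L M) :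
    M ∈ cycClass L := by
  obtain ⟨n, rfl | rfl⟩ := h
  all_goals
    simp only [cycClass, List.mem_flatMap, List.mem_range, List.mem_cons, List.not_mem_nil]
    refine ⟨n % L.length, Nat.mod_lt _ (List.length_pos_iff.2 hL), ?_⟩
  · exact .inl (List.rotate_mod L n).symm
  · exact .inr (.inl (by rw [← List.length_reverse, List.rotate_mod]))

end CyclicOrder

section Door

inductive Tunnel | opening | traverse | closing
deriving DecidableEq

instance : Fintype Tunnel :=
  ⟨{.opening, .traverse, .closing}, by intro t; cases t <;> decide⟩

namespace Tunnel

def entrance : Tunnel → DoorLoc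
  | opening => .O0 | traverse => .T0 | closing => .C0

def exit : Tunnel → DoorLoc
  | opening => .O1 | traverse => .T1 | closing => .C1

def isDirected (dO dT dC : Bool) : Tunnel → Bool
  | opening => dO | traverse => dT | closing => dC

/-- A door state in which the tunnel is traversable and traversing it keeps the state. -/
def diodeState : Tunnel → Bool
  | closing => false | _ => true

end Tunnel

def DoorLoc.isEntrance : DoorLoc → Bool
  | .O0 | .T0 | .C0 => true
  | _ => false

def flipEnds : Option Tunnel → Equiv.Perm DoorLoc
  | none => 1
  | some t => Equiv.swap t.entrance t.exit

lemma flipEnds_flipEnds (w : Option Tunnel) (l : DoorLoc) : flipEnds w (flipEnds w l) = l := by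
  decide +revert

lemma exists_isDirected_eq_iff (dO dT dC b : Bool) :
    (∃ t : Tunnel, t.isDirected dO dT dC = b) ↔ dO = b ∨ dT = b ∨ dC = b := by
  constructor
  · rintro ⟨_ | _ | _, h⟩ <;> simp_all [Tunnel.isDirected]
  · rintro (h | h | h)
    exacts [⟨.opening, h⟩, ⟨.traverse, h⟩, ⟨.closing, h⟩]

variable (dO dT dC : Bool)

instance (x y : Bool × DoorLoc) : Decidable (doorTrav dO dT dC x y) := by
  unfold doorTrav; infer_instance

lemma doorTrav_diodeState_entrance_iff {u : Tunnel} (hu : u.isDirected dO dT dC = true)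
    (y : Bool × DoorLoc) :
    doorTrav dO dT dC (u.diodeState, u.entrance) y ↔ y = (u.diodeState, u.exit) := by
  decide +revert

lemma not_doorTrav_diodeState_exit {u : Tunnel} (hu : u.isDirected dO dT dC = true)
    (y : Bool × DoorLoc) : ¬ doorTrav dO dT dC (u.diodeState, u.exit) y := by
  decide +revert

/-- The reflexive transitive closure of `doorTrav`, written out: the tunnels of a door are
disjoint, so every reachable pair is joined by at most two traversals of one tunnel. -/
def DoorReach (x y : Bool × DoorLoc) : Prop :=
  x = y ∨
  (x.2 = .O0 ∧ y = (true, .O1)) ∨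
  (dO = false ∧ (x.2 = .O0 ∨ x.2 = .O1) ∧ (y = (true, .O0) ∨ y = (true, .O1))) ∨
  (x.1 = true ∧ x.2 = .T0 ∧ y = (true, .T1)) ∨
  (dT = false ∧ x.1 = true ∧ (x.2 = .T0 ∨ x.2 = .T1) ∧
    (y = (true, .T0) ∨ y = (true, .T1))) ∨
  (x.2 = .C0 ∧ y = (false, .C1)) ∨
  (dC = false ∧ (x.2 = .C0 ∨ x.2 = .C1) ∧ (y = (false, .C0) ∨ y = (false, .C1)))

instance (x y : Bool × DoorLoc) : Decidable (DoorReach dO dT dC x y) := by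
  unfold DoorReach; infer_instance

lemma DoorReach.tail {x y z : Bool × DoorLoc} (hxy : DoorReach dO dT dC x y)
    (hyz : doorTrav dO dT dC y z) : DoorReach dO dT dC x z := by
  decide +revert

lemma eq_or_doorTrav_of_doorReach {x y : Bool × DoorLoc} (h : DoorReach dO dT dC x y) :
    x = y ∨ doorTrav dO dT dC x y ∨ ∃ m, doorTrav dO dT dC x m ∧ doorTrav dO dT dC m y := by
  decide +revert

lemma reflTransGen_doorTrav_iff (x y : Bool × DoorLoc) :
    Relation.ReflTransGen (doorTrav dO dT dC) x y ↔ DoorReach dO dT dC x y := by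
  constructor
  · intro h
    induction h with
    | refl => exact Or.inl rfl
    | tail _ hyz ih => exact ih.tail dO dT dC hyz
  · intro h
    rcases eq_or_doorTrav_of_doorReach dO dT dC h with rfl | hxy | ⟨m, hxm, hmy⟩
    · exact .refl
    · exact .single hxy
    · exact .head hxm (.single hmy)

lemma reflTransGen_directed_door_iff {w : Option Tunnel}
    (hw : ∀ t, w = some t → t.isDirected dO dT dC = false) (s s' : Bool) (a b : DoorLoc) :
    Relation.ReflTransGen (doorTrav true true true) (s, a) (s', b) ↔ (s, a) = (s', b) ∨
      (a.isEntrance ∧ b.isEntrance = false ∧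
        Relation.ReflTransGen (doorTrav dO dT dC) (s, flipEnds w a) (s', flipEnds w b)) := by
  simp only [reflTransGen_doorTrav_iff]
  decide +revert

end Door

lemma not_cycEquiv_case8Cyc_map_flipEnds {L : List DoorLoc} (hL : CycEquiv case8Cyc L)
    (t : Tunnel) : ¬ CycEquiv case8Cyc (L.map (flipEnds (some t))) := by
  have key : ∀ t : Tunnel, ∀ M ∈ cycClass case8Cyc,
      M.map (flipEnds (some t)) ∉ cycClass case8Cyc := by
    decide
  have hne : case8Cyc ≠ [] := by simp [case8Cyc]
  exact fun h => key t L (hL.mem_cycClass hne) (h.mem_cycClass hne)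

namespace DiodeWiring

/-! Copy `none` of the door is the central door and copy `some p` the diode at location `p`.
The dart `inl x` sits at the location `x` of a copy, the dart `inr x` at a junction. -/

abbrev Dart := (Option DoorLoc × DoorLoc) ⊕ (Option DoorLoc × DoorLoc)

variable (u : Tunnel) (w : Option Tunnel)

def outerEnd (p : DoorLoc) : DoorLoc := if p.isEntrance then u.entrance else u.exit

def innerEnd (p : DoorLoc) : DoorLoc := if p.isEntrance then u.exit else u.entrance

lemma outerEnd_ne_innerEnd (p : DoorLoc) : outerEnd u p ≠ innerEnd u p := by
  decide +revert

lemma outerEnd_of_isEntrance {p : DoorLoc} (hp : p.isEntrance = true) :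
    outerEnd u p = u.entrance ∧ innerEnd u p = u.exit := by
  simp [outerEnd, innerEnd, hp]

lemma outerEnd_of_not_isEntrance {p : DoorLoc} (hp : p.isEntrance = false) :
    outerEnd u p = u.exit ∧ innerEnd u p = u.entrance := by
  simp [outerEnd, innerEnd, hp]

def partner : Option DoorLoc × DoorLoc → Option DoorLoc × DoorLoc
  | (none, q) => (some (flipEnds w q), innerEnd u (flipEnds w q))
  | (some p, l) => if l = innerEnd u p then (none, flipEnds w p) else (some p, l)

/-- A dangling location `x` is joined to its own junction `inr x`; the junctions of the twelve
wired locations are paired off into six isolated edges. -/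
def wire : Dart → Dart
  | .inl x => if partner u w x = x then .inr x else .inl (partner u w x)
  | .inr x => if partner u w x = x then .inl x else .inr (partner u w x)

lemma wire_wire (d : Dart) : wire u w (wire u w d) = d := by
  decide +revert

lemma wire_ne (d : Dart) : wire u w d ≠ d := by
  decide +revert

lemma wire_inl_none (q : DoorLoc) :
    wire u w (.inl (none, q)) = .inl (some (flipEnds w q), innerEnd u (flipEnds w q)) := by
  decide +revert

lemma wire_inr_none (q : DoorLoc) :
    wire u w (.inr (none, q)) = .inr (some (flipEnds w q), innerEnd u (flipEnds w q)) := by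
  decide +revert

lemma wire_inl_innerEnd (p : DoorLoc) :
    wire u w (.inl (some p, innerEnd u p)) = .inl (none, flipEnds w p) := by
  decide +revert

lemma wire_inl_of_ne {p l : DoorLoc} (h : l ≠ innerEnd u p) :
    wire u w (.inl (some p, l)) = .inr (some p, l) := by
  decide +revert

lemma wire_inr_of_ne {p l : DoorLoc} (h : l ≠ innerEnd u p) :
    wire u w (.inr (some p, l)) = .inl (some p, l) := by
  decide +revert

/-- Each edge is labelled by its dangling location, the central end of its wire, or the diode
end of its isolated edge. -/
def edgeLabel : Dart → Option DoorLoc × DoorLoc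
  | .inl (none, q) => (none, q)
  | .inl (some p, l) => if l = innerEnd u p then (none, flipEnds w p) else (some p, l)
  | .inr (none, q) => (some (flipEnds w q), innerEnd u (flipEnds w q))
  | .inr (some p, l) => (some p, l)

def edgeRep : Option DoorLoc × DoorLoc → Dart
  | (none, q) => .inl (none, q)
  | (some p, l) => if l = innerEnd u p then .inr (some p, l) else .inl (some p, l)

lemma edgeLabel_wire (d : Dart) : edgeLabel u w (wire u w d) = edgeLabel u w d := by
  decide +revert

lemma edgeLabel_edgeRep (x : Option DoorLoc × DoorLoc) : edgeLabel u w (edgeRep u x) = x := by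
  decide +revert

lemma edgeRep_edgeLabel (d : Dart) :
    edgeRep u (edgeLabel u w d) = d ∨ wire u w (edgeRep u (edgeLabel u w d)) = d := by
  decide +revert

lemma orbCount_wire : orbCount (wire u w) = 42 := by
  rw [orbCount_eq_nat_card _ (edgeLabel u w) (edgeRep u) (edgeLabel_wire u w)
    (edgeLabel_edgeRep u w)]
  · rw [Nat.card_eq_fintype_card]; rfl
  · intro d
    rcases edgeRep_edgeLabel u w d with h | h
    · rw [h]; exact .refl _
    · exact .rel _ _ h

/-- The faces of the map: `none` is the outer face, `some q` the face of the isolated edge at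
the junction `(none, q)`. -/
def faceLabel : Dart → Option DoorLoc
  | .inl _ => none
  | .inr (none, q) => some q
  | .inr (some p, l) => if l = innerEnd u p then some (flipEnds w p) else none

def faceRep : Option DoorLoc → Dart
  | none => .inl (none, .O0)
  | some q => .inr (none, q)

lemma faceLabel_faceRep (o : Option DoorLoc) : faceLabel u w (faceRep o) = o := by
  cases o <;> rfl

lemma faceLabel_wire (d : Dart) : faceLabel u w (wire u w d) = faceLabel u w d := by
  decide +revert

section Map

variable (e : Fin 6 ≃ DoorLoc)

def rotation : Equiv.Perm Dart :=
  Equiv.sumCongr (Equiv.prodCongr (Equiv.refl _) (cycSucc e)) (Equiv.refl _)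

lemma rotation_inl (i : Option DoorLoc) (l : DoorLoc) :
    rotation e (.inl (i, l)) = .inl (i, cycSucc e l) := rfl

lemma rotation_inr (x : Option DoorLoc × DoorLoc) : rotation e (.inr x) = .inr x := rfl

lemma rotation_iterate_inl (i : Option DoorLoc) (l : DoorLoc) (k : ℕ) :
    (rotation e)^[k] (.inl (i, l)) = .inl (i, (cycSucc e)^[k] l) := by
  induction k with
  | zero => rfl
  | succ k ih => rw [Function.iterate_succ_apply', ih, rotation_inl, Function.iterate_succ_apply']

lemma orbCount_rotation : orbCount (rotation e) = 49 := by
  rw [orbCount_eq_nat_card _ (Sum.map Prod.fst id) (Sum.elim (fun i => .inl (i, .O0)) .inr)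
    (by rintro (_ | _) <;> rfl) (by rintro (_ | _) <;> rfl)]
  · rw [Nat.card_eq_fintype_card]; rfl
  · rintro (⟨i, l⟩ | x)
    · obtain ⟨k, -, rfl⟩ := exists_cycSucc_iterate_succ_eq e .O0 l
      simpa [rotation_iterate_inl] using
        eqvGen_iterate (fun _ => rfl) (.inl (i, .O0) : Dart) (f := rotation e) (k + 1)
    · exact .refl _

lemma faceLabel_rotation (d : Dart) : faceLabel u w (rotation e d) = faceLabel u w d := by
  rcases d with ⟨i, l⟩ | x <;> rfl

def faceStep (d : Dart) : Dart := rotation e (wire u w d)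

lemma faceStep_inl_none (q : DoorLoc) :
    faceStep u w e (.inl (none, q)) =
      .inl (some (flipEnds w q), cycSucc e (innerEnd u (flipEnds w q))) := by
  rw [faceStep, wire_inl_none, rotation_inl]

lemma faceStep_inl_innerEnd (p : DoorLoc) :
    faceStep u w e (.inl (some p, innerEnd u p)) = .inl (none, cycSucc e (flipEnds w p)) := by
  rw [faceStep, wire_inl_innerEnd, rotation_inl]

lemma faceStep_inl_of_ne {p l : DoorLoc} (h : l ≠ innerEnd u p) :
    faceStep u w e (.inl (some p, l)) = .inr (some p, l) := by
  rw [faceStep, wire_inl_of_ne u w h, rotation_inr]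

lemma faceStep_inr_of_ne {p l : DoorLoc} (h : l ≠ innerEnd u p) :
    faceStep u w e (.inr (some p, l)) = .inl (some p, cycSucc e l) := by
  rw [faceStep, wire_inr_of_ne u w h, rotation_inl]

/- The outer face leaves the central location `q` along its wire, goes once around the diode
at `flipEnds w q` (alternating between its locations and their junctions) and returns along
the wire to the next central location: twelve steps in all. -/

lemma faceStep_iterate_odd (q : DoorLoc) {k : ℕ} (hk : k ≤ 5) :
    (faceStep u w e)^[2 * k + 1] (.inl (none, q)) =
      .inl (some (flipEnds w q), (cycSucc e)^[k + 1] (innerEnd u (flipEnds w q))) := by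
  induction k with
  | zero => exact faceStep_inl_none u w e q
  | succ k ih =>
    have hne : (cycSucc e)^[k + 1] (innerEnd u (flipEnds w q)) ≠ innerEnd u (flipEnds w q) :=
      cycSucc_iterate_ne_self e (by omega) (by omega) _
    rw [show 2 * (k + 1) + 1 = (2 * k + 1) + 1 + 1 by ring, Function.iterate_succ_apply',
      Function.iterate_succ_apply', ih (by omega), faceStep_inl_of_ne u w e hne,
      faceStep_inr_of_ne u w e hne, ← Function.iterate_succ_apply' (cycSucc e)]

lemma faceStep_iterate_even (q : DoorLoc) {k : ℕ} (hk : k ≤ 4) :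
    (faceStep u w e)^[2 * k + 2] (.inl (none, q)) =
      .inr (some (flipEnds w q), (cycSucc e)^[k + 1] (innerEnd u (flipEnds w q))) := by
  rw [Function.iterate_succ_apply', faceStep_iterate_odd u w e q (by omega),
    faceStep_inl_of_ne u w e (cycSucc_iterate_ne_self e (by omega) (by omega) _)]

lemma faceStep_iterate_twelve (q : DoorLoc) :
    (faceStep u w e)^[12] (.inl (none, q)) = .inl (none, cycSucc e q) := by
  rw [Function.iterate_succ_apply', faceStep_iterate_odd u w e q (k := 5) le_rfl,
    cycSucc_iterate_period, faceStep_inl_innerEnd, flipEnds_flipEnds]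

lemma faceStep_iterate_twelve_mul (q : DoorLoc) (m : ℕ) :
    (faceStep u w e)^[12 * m] (.inl (none, q)) = .inl (none, (cycSucc e)^[m] q) := by
  induction m generalizing q with
  | zero => rfl
  | succ m ih =>
    rw [mul_add_one, Function.iterate_add_apply, faceStep_iterate_twelve, ih,
      Function.iterate_succ_apply]

lemma faceStep_iterate_eq_inl_some {q c l : DoorLoc} {m : ℕ} (hm : m < 12)
    (h : (faceStep u w e)^[m] (.inl (none, q)) = .inl (some c, l)) :
    ∃ k ≤ 5, m = 2 * k + 1 ∧ c = flipEnds w q ∧ (cycSucc e)^[k + 1] (innerEnd u c) = l := by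
  obtain ⟨k, rfl | rfl⟩ := Nat.even_or_odd' m
  · rcases k with _ | k
    · simp at h
    · rw [show 2 * (k + 1) = 2 * k + 2 by ring, faceStep_iterate_even u w e q (by omega)] at h
      simp at h
  · rw [faceStep_iterate_odd u w e q (by omega)] at h
    obtain ⟨rfl, rfl⟩ : flipEnds w q = c ∧ _ = l := by simpa using h
    exact ⟨k, by omega, rfl, rfl, rfl⟩

lemma eqvGen_faceStep_of_faceLabel_eq_none {d : Dart} (hd : faceLabel u w d = none) :
    Relation.EqvGen (fun x y => faceStep u w e x = y) (.inl (none, .O0)) d := by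
  have hstep (x : Dart) : faceStep u w e x = faceStep u w e x := rfl
  have hcenter (q : DoorLoc) :
      Relation.EqvGen (fun x y => faceStep u w e x = y) (.inl (none, .O0)) (.inl (none, q)) := by
    obtain ⟨k, -, hk⟩ := exists_cycSucc_iterate_succ_eq e .O0 q
    simpa [faceStep_iterate_twelve_mul, hk] using
      eqvGen_iterate hstep (.inl (none, .O0)) (12 * (k + 1))
  have htour (q : DoorLoc) (m : ℕ) : Relation.EqvGen (fun x y => faceStep u w e x = y)
      (.inl (none, .O0)) ((faceStep u w e)^[m] (.inl (none, q))) :=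
    (hcenter q).trans _ _ _ (eqvGen_iterate hstep _ m)
  rcases d with ⟨_ | p, l⟩ | ⟨_ | p, l⟩
  · exact hcenter l
  · obtain ⟨k, hk, rfl⟩ := exists_cycSucc_iterate_succ_eq e (innerEnd u p) l
    simpa [faceStep_iterate_odd u w e _ hk, flipEnds_flipEnds] using
      htour (flipEnds w p) (2 * k + 1)
  · simp [faceLabel] at hd
  · have hl : l ≠ innerEnd u p := by simpa [faceLabel] using hd
    obtain ⟨k, hk, rfl⟩ := exists_cycSucc_iterate_succ_eq e (innerEnd u p) l
    have hk4 : k ≤ 4 := by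
      by_contra
      exact hl (by rw [show k = 5 by omega, cycSucc_iterate_period])
    simpa [faceStep_iterate_even u w e _ hk4, flipEnds_flipEnds] using
      htour (flipEnds w p) (2 * k + 2)

lemma eqvGen_faceStep_faceRep (d : Dart) :
    Relation.EqvGen (fun x y => faceStep u w e x = y) (faceRep (faceLabel u w d)) d := by
  rcases hd : faceLabel u w d with _ | q
  · exact eqvGen_faceStep_of_faceLabel_eq_none u w e hd
  · rcases d with x | ⟨_ | p, l⟩
    · simp [faceLabel] at hd
    · obtain rfl : l = q := by simpa [faceLabel] using hd
      exact .refl _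
    · obtain ⟨rfl, rfl⟩ : l = innerEnd u p ∧ flipEnds w p = q := by
        simpa [faceLabel] using hd
      exact .rel _ _ (by rw [faceRep, faceStep, wire_inr_none, rotation_inr, flipEnds_flipEnds])

lemma orbCount_faceStep : orbCount (faceStep u w e) = 7 := by
  rw [orbCount_eq_nat_card (faceStep u w e) (faceLabel u w) faceRep
    (fun d => (faceLabel_rotation u w e _).trans (faceLabel_wire u w d)) (faceLabel_faceRep u w)
    (eqvGen_faceStep_faceRep u w e)]
  rw [Nat.card_eq_fintype_card]; rfl

lemma orbCount2_rotation_wire : orbCount2 (rotation e) (wire u w) = 7 := by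
  rw [orbCount2_eq_nat_card _ _ (faceLabel u w) faceRep (faceLabel_rotation u w e)
    (faceLabel_wire u w) (faceLabel_faceRep u w)
    (fun d => eqvGen_or_of_eqvGen_comp (eqvGen_faceStep_faceRep u w e d))]
  rw [Nat.card_eq_fintype_card]; rfl

lemma faceStep_next_outerEnd (a b : DoorLoc) (hb : b = flipEnds w (cycSucc e (flipEnds w a))) :
    ∃ k, 0 < k ∧
      (faceStep u w e)^[k] (.inl (some a, outerEnd u a)) = .inl (some b, outerEnd u b) ∧
      ∀ j, 0 < j → j < k → ∀ c,
        (faceStep u w e)^[j] (.inl (some a, outerEnd u a)) ≠ .inl (some c, outerEnd u c) := by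
  have houter (p : DoorLoc) : ∃ k ≤ 4, (cycSucc e)^[k + 1] (innerEnd u p) = outerEnd u p := by
    obtain ⟨k, hk, hkp⟩ := exists_cycSucc_iterate_succ_eq e (innerEnd u p) (outerEnd u p)
    refine ⟨k, ?_, hkp⟩
    by_contra
    rw [show k = 5 by omega, cycSucc_iterate_period] at hkp
    exact outerEnd_ne_innerEnd u p hkp.symm
  obtain ⟨ka, hka, hka'⟩ := houter a
  obtain ⟨kb, hkb, hkb'⟩ := houter b
  have hA : (faceStep u w e)^[2 * ka + 1] (.inl (none, flipEnds w a)) =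
      .inl (some a, outerEnd u a) := by
    rw [faceStep_iterate_odd u w e _ (by omega), flipEnds_flipEnds, hka']
  have hB : (faceStep u w e)^[2 * kb + 1] (.inl (none, flipEnds w b)) =
      .inl (some b, outerEnd u b) := by
    rw [faceStep_iterate_odd u w e _ (by omega), flipEnds_flipEnds, hkb']
  have hshift (j : ℕ) : (faceStep u w e)^[j] (.inl (some a, outerEnd u a)) =
      (faceStep u w e)^[j + (2 * ka + 1)] (.inl (none, flipEnds w a)) := by
    rw [Function.iterate_add_apply, hA]
  have hwrap (m : ℕ) : (faceStep u w e)^[m + 12] (.inl (none, flipEnds w a)) =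
      (faceStep u w e)^[m] (.inl (none, flipEnds w b)) := by
    rw [Function.iterate_add_apply, faceStep_iterate_twelve, hb, flipEnds_flipEnds]
  refine ⟨12 - (2 * ka + 1) + (2 * kb + 1), by omega, ?_, fun j hj₀ hj c hc => ?_⟩
  · rw [hshift, show 12 - (2 * ka + 1) + (2 * kb + 1) + (2 * ka + 1) = 2 * kb + 1 + 12 by omega,
      hwrap, hB]
  rw [hshift] at hc
  rcases lt_or_ge (j + (2 * ka + 1)) 12 with hlt | hge
  · obtain ⟨k, hk, hm, rfl, hkc⟩ := faceStep_iterate_eq_inl_some u w e hlt hc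
    rw [flipEnds_flipEnds, ← hka', cycSucc_iterate_eq_iterate_iff] at hkc
    omega
  · rw [show j + (2 * ka + 1) = j + (2 * ka + 1) - 12 + 12 by omega, hwrap] at hc
    obtain ⟨k, hk, hm, rfl, hkc⟩ := faceStep_iterate_eq_inl_some u w e (by omega) hc
    rw [flipEnds_flipEnds, ← hkb', cycSucc_iterate_eq_iterate_iff] at hkc
    omega

end Map

def encode (s : Bool) : Option DoorLoc → Bool
  | none => s
  | some _ => u.diodeState

lemma encode_some (s : Bool) (p : DoorLoc) : encode u s (some p) = u.diodeState := rfl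

lemma encode_injective : Function.Injective (encode u) := fun _ _ h => congrFun h none

lemma updState_encode_none (s s' : Bool) : updState (encode u s) none s' = encode u s' := by
  funext i
  cases i <;> simp [updState, encode]

lemma updState_encode_some (s : Bool) (p : DoorLoc) :
    updState (encode u s) (some p) u.diodeState = encode u s := by
  funext i
  cases i <;> simp [updState, encode]

section System

variable (e : Fin 6 ≃ DoorLoc) (d : PGData Bool DoorLoc)
  (he : ∀ a, cycNext d.cyc a = cycSucc e a)

abbrev system : MSystem (fun _ : Unit => d) where
  ι := Option DoorLoc
  instFin := inferInstance
  kind _ := ()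
  J := Option DoorLoc × DoorLoc
  juncFin := inferInstance
  D := Dart
  dartFin := inferInstance
  σ := rotation e
  τ := Function.Involutive.toPerm (wire u w) (wire_wire u w)
  τ_invol := wire_wire u w
  τ_nofix := wire_ne u w
  vert := Sum.map Prod.fst id
  port := Sum.elim Prod.snd Prod.snd
  port_unique i l := by
    refine ⟨.inl (i, l), ⟨rfl, rfl⟩, ?_⟩
    rintro (⟨i', l'⟩ | x) ⟨hv, hp⟩
    · cases hv; cases hp; rfl
    · cases hv
  σ_vert := by rintro (_ | _) <;> rfl
  σ_port := by
    rintro (⟨_, l⟩ | _) _ hv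
    · exact (he l).symm
    · cases hv
  σ_junc := by
    rintro (_ | x) (_ | y) j hv hv'
    all_goals simp only [Sum.map_inl, Sum.map_inr, reduceCtorEq, id, Sum.inr.injEq] at hv hv'
    subst hv hv'
    exact .refl _

lemma system_endpt (x : Dart) : (system u w e d he).endpt x = x := by
  rcases x with ⟨i, l⟩ | x <;> rfl

lemma system_isDartAt_iff (x : Option DoorLoc × DoorLoc) (y : Dart) :
    (system u w e d he).IsDartAt x y ↔ y = .inl x := by
  rcases y with ⟨i, l⟩ | y
  · simp [MSystem.IsDartAt, system, Prod.ext_iff]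
  · simp [MSystem.IsDartAt, system]

lemma system_isPlanar : (system u w e d he).IsPlanar := by
  change orbCount (rotation e) + orbCount (faceStep u w e) =
    orbCount (wire u w) + 2 * orbCount2 (rotation e) (wire u w)
  rw [orbCount_rotation, orbCount_faceStep, orbCount_wire, orbCount2_rotation_wire]

lemma eq_of_mStep {σg σg' : Option DoorLoc → Bool} {x y : Dart}
    (h : MStep (fun _ => d) (system u w e d he) (σg, x) (σg', y)) :
    (∃ i l l' s', x = .inl (i, l) ∧ y = .inl (i, l') ∧ σg' = updState σg i s' ∧
      d.trav (σg i, l) (s', l')) ∨ (σg' = σg ∧ y = wire u w x) := by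
  rcases h with ⟨ht⟩ | ⟨z⟩
  · exact .inl ⟨_, _, _, _, rfl, rfl, rfl, ht⟩
  · exact .inr ⟨rfl, (system_endpt u w e d he _).trans
      (congrArg (wire u w) (system_endpt u w e d he z).symm)⟩

lemma mStep_wire (σg : Option DoorLoc → Bool) (x : Dart) :
    MStep (fun _ => d) (system u w e d he) (σg, x) (σg, wire u w x) := by
  have := MStep.wire (σg := σg) (S := system u w e d he) x
  rwa [system_endpt, system_endpt] at this

lemma reflTransGen_mStep_central {x y : Bool × DoorLoc} (h : Relation.ReflTransGen d.trav x y) :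
    Relation.ReflTransGen (MStep (fun _ => d) (system u w e d he))
      (encode u x.1, .inl (none, x.2)) (encode u y.1, .inl (none, y.2)) := by
  induction h with
  | refl => exact .refl
  | @tail y z _ ht ih =>
    have := MStep.trav (S := system u w e d he) (σg := encode u y.1) (i := none) (s' := z.1) ht
    rw [updState_encode_none] at this
    exact ih.tail this

end System

variable (dO dT dC : Bool)

inductive Reached (s : Bool) (a : DoorLoc) : (Option DoorLoc → Bool) × Dart → Prop
  | start : Reached s a (encode u s, .inl (some a, outerEnd u a))
  | startJunction : Reached s a (encode u s, .inr (some a, outerEnd u a))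
  | entered : a.isEntrance → Reached s a (encode u s, .inl (some a, innerEnd u a))
  | central {s₁ q} : a.isEntrance →
      Relation.ReflTransGen (doorTrav dO dT dC) (s, flipEnds w a) (s₁, q) →
      Reached s a (encode u s₁, .inl (none, q))
  | leaving {s₁ q} : a.isEntrance →
      Relation.ReflTransGen (doorTrav dO dT dC) (s, flipEnds w a) (s₁, q) →
      Reached s a (encode u s₁, .inl (some (flipEnds w q), innerEnd u (flipEnds w q)))
  | exited {s₁ b} : a.isEntrance →
      Relation.ReflTransGen (doorTrav dO dT dC) (s, flipEnds w a) (s₁, flipEnds w b) →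
      b.isEntrance = false → Reached s a (encode u s₁, .inl (some b, outerEnd u b))
  | exitedJunction {s₁ b} : a.isEntrance →
      Relation.ReflTransGen (doorTrav dO dT dC) (s, flipEnds w a) (s₁, flipEnds w b) →
      b.isEntrance = false → Reached s a (encode u s₁, .inr (some b, outerEnd u b))

variable {u w dO dT dC}

lemma Reached.wire {s : Bool} {a : DoorLoc} {σg : Option DoorLoc → Bool} {x : Dart}
    (h : Reached u w dO dT dC s a (σg, x)) : Reached u w dO dT dC s a (σg, wire u w x) := by
  have hne := outerEnd_ne_innerEnd u
  cases h with
  | start => rw [wire_inl_of_ne u w (hne a)]; exact .startJunction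
  | startJunction => rw [wire_inr_of_ne u w (hne a)]; exact .start
  | entered ha => rw [wire_inl_innerEnd]; exact .central ha .refl
  | central ha hr => rw [wire_inl_none]; exact .leaving ha hr
  | leaving ha hr => rw [wire_inl_innerEnd, flipEnds_flipEnds]; exact .central ha hr
  | exited ha hr hb => rw [wire_inl_of_ne u w (hne _)]; exact .exitedJunction ha hr hb
  | exitedJunction ha hr hb => rw [wire_inr_of_ne u w (hne _)]; exact .exited ha hr hb

lemma Reached.trav (hu : u.isDirected dO dT dC = true) {s : Bool} {a : DoorLoc}
    {σg : Option DoorLoc → Bool} {i : Option DoorLoc} {l l' : DoorLoc} {s' : Bool}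
    (h : Reached u w dO dT dC s a (σg, .inl (i, l)))
    (ht : doorTrav dO dT dC (σg i, l) (s', l')) :
    Reached u w dO dT dC s a (updState σg i s', .inl (i, l')) := by
  have hexit := not_doorTrav_diodeState_exit dO dT dC hu (s', l')
  have hentrance := doorTrav_diodeState_entrance_iff dO dT dC hu (s', l')
  cases h with
  | start =>
    rw [encode_some] at ht
    cases ha : a.isEntrance
    · rw [(outerEnd_of_not_isEntrance u ha).1] at ht
      exact (hexit ht).elim
    · rw [(outerEnd_of_isEntrance u ha).1, hentrance] at ht
      obtain ⟨rfl, rfl⟩ := Prod.mk.inj ht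
      rw [updState_encode_some, ← (outerEnd_of_isEntrance u ha).2]
      exact .entered ha
  | entered ha =>
    rw [encode_some, (outerEnd_of_isEntrance u ha).2] at ht
    exact (hexit ht).elim
  | central ha hr =>
    rw [updState_encode_none]
    exact .central ha (hr.tail ht)
  | @leaving s₁ q ha hr =>
    rw [encode_some] at ht
    cases hq : (flipEnds w q).isEntrance
    · rw [(outerEnd_of_not_isEntrance u hq).2, hentrance] at ht
      obtain ⟨rfl, rfl⟩ := Prod.mk.inj ht
      rw [updState_encode_some, ← (outerEnd_of_not_isEntrance u hq).1]
      exact .exited ha (by rwa [flipEnds_flipEnds]) hq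
    · rw [(outerEnd_of_isEntrance u hq).2] at ht
      exact (hexit ht).elim
  | exited ha hr hb =>
    rw [encode_some, (outerEnd_of_not_isEntrance u hb).1] at ht
    exact (hexit ht).elim

lemma Reached.reflTransGen_directed (hw : ∀ t, w = some t → t.isDirected dO dT dC = false)
    {s s' : Bool} {a b : DoorLoc} {cfg : (Option DoorLoc → Bool) × Dart}
    (h : Reached u w dO dT dC s a cfg) (hcfg : cfg = (encode u s', .inl (some b, outerEnd u b))) :
    Relation.ReflTransGen (doorTrav true true true) (s, a) (s', b) := by
  rw [reflTransGen_directed_door_iff dO dT dC hw]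
  have hne := outerEnd_ne_innerEnd u
  cases h with
  | start =>
    obtain ⟨hs, rfl, -⟩ : encode u s = encode u s' ∧ a = b ∧ _ := by simpa using hcfg
    exact .inl (by rw [encode_injective u hs])
  | entered ha =>
    obtain ⟨-, rfl, h⟩ : _ ∧ a = b ∧ _ := by simpa using hcfg
    exact (hne a h.symm).elim
  | leaving ha hr =>
    obtain ⟨-, rfl, h⟩ : _ ∧ _ = b ∧ _ := by simpa using hcfg
    exact (hne _ h.symm).elim
  | @exited s₁ b' ha hr hb =>
    obtain ⟨hs, rfl, -⟩ : encode u s₁ = encode u s' ∧ b' = b ∧ _ := by simpa using hcfg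
    rw [encode_injective u hs] at hr
    exact .inr ⟨ha, hb, hr⟩
  | _ => simp at hcfg

variable {e : Fin 6 ≃ DoorLoc} {d : PGData Bool DoorLoc}
  (he : ∀ a, cycNext d.cyc a = cycSucc e a)

lemma reached_of_reflTransGen (hd : d.trav = doorTrav dO dT dC)
    (hu : u.isDirected dO dT dC = true) {s : Bool} {a : DoorLoc}
    {cfg : (Option DoorLoc → Bool) × Dart}
    (h : Relation.ReflTransGen (MStep (fun _ => d) (system u w e d he))
      (encode u s, .inl (some a, outerEnd u a)) cfg) :
    Reached u w dO dT dC s a cfg := by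
  induction h with
  | refl => exact .start
  | @tail cfg₁ cfg₂ _ hstep ih =>
    obtain ⟨σg, x⟩ := cfg₁
    obtain ⟨σg', y⟩ := cfg₂
    rcases eq_of_mStep u w e d he hstep with ⟨i, l, l', s', rfl, rfl, rfl, ht⟩ | ⟨rfl, rfl⟩
    · exact ih.trav hu (hd ▸ ht)
    · exact ih.wire

lemma reflTransGen_mStep_of_directed (hd : d.trav = doorTrav dO dT dC)
    (hu : u.isDirected dO dT dC = true) (hw : ∀ t, w = some t → t.isDirected dO dT dC = false)
    {s s' : Bool} {a b : DoorLoc}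
    (h : Relation.ReflTransGen (doorTrav true true true) (s, a) (s', b)) :
    Relation.ReflTransGen (MStep (fun _ => d) (system u w e d he))
      (encode u s, .inl (some a, outerEnd u a)) (encode u s', .inl (some b, outerEnd u b)) := by
  rcases (reflTransGen_directed_door_iff dO dT dC hw s s' a b).1 h with h | ⟨ha, hb, hr⟩
  · obtain ⟨rfl, rfl⟩ := Prod.mk.inj h
    exact .refl
  have hdiode (s₁ : Bool) (p : DoorLoc) : MStep (fun _ => d) (system u w e d he)
      (encode u s₁, .inl (some p, u.entrance)) (encode u s₁, .inl (some p, u.exit)) := by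
    have := MStep.trav (S := system u w e d he) (σg := encode u s₁) (i := some p)
      (s' := u.diodeState) (hd ▸ (doorTrav_diodeState_entrance_iff dO dT dC hu _).2 rfl)
    rwa [updState_encode_some] at this
  have hA := outerEnd_of_isEntrance u ha
  have hB := outerEnd_of_not_isEntrance u hb
  have henter := (Relation.ReflTransGen.single (hdiode s a)).tail (mStep_wire u w e d he _ _)
  rw [← hA.1, ← hA.2, wire_inl_innerEnd] at henter
  have hleave := mStep_wire u w e d he (encode u s') (.inl (none, flipEnds w b))
  rw [wire_inl_none, flipEnds_flipEnds, hB.2] at hleave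
  have hexit := hdiode s' b
  rw [← hB.1] at hexit
  exact ((henter.trans (reflTransGen_mStep_central u w e d he (hd ▸ hr))).tail hleave).tail hexit

end DiodeWiring

open DiodeWiring in
theorem planarlySimulates_directed_door_map_flipEnds {dO dT dC : Bool} {u : Tunnel}
    {w : Option Tunnel}
    (hu : u.isDirected dO dT dC = true) (hw : ∀ t, w = some t → t.isDirected dO dT dC = false)
    {c : List DoorLoc} {h1 : c.Nodup} {h2 : ∀ l, l ∈ c}
    {c' : List DoorLoc} {h1' : c'.Nodup} {h2' : ∀ l, l ∈ c'} (hc' : c' = c.map (flipEnds w)) :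
    PlanarlySimulates (mkPG (⟨doorTrav dO dT dC, c, h1, h2⟩ : PGData Bool DoorLoc))
      (mkPG (⟨doorTrav true true true, c', h1', h2'⟩ : PGData Bool DoorLoc)) := by
  obtain ⟨e, he⟩ := exists_equiv_cycNext (n := 5) rfl c h1 h2
  have hdart := system_isDartAt_iff u w e ⟨doorTrav dO dT dC, c, h1, h2⟩ he
  refine ⟨system u w e _ he, fun a => (some a, outerEnd u a), encode u,
    fun a b h => Option.some_injective _ (congrArg Prod.fst h), encode_injective u,
    system_isPlanar u w e _ he, fun s s' a b => ⟨fun h => ?_,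
      reflTransGen_mStep_of_directed he rfl hu hw⟩, true, fun (a : DoorLoc) da db hda hdb => ?_⟩
  · exact (reached_of_reflTransGen he rfl hu h).reflTransGen_directed hw rfl
  have hnext : cycNext c' a = flipEnds w (cycSucc e (flipEnds w a)) := by
    rw [hc', ← he, ← cycNext_map (flipEnds w).injective, flipEnds_flipEnds]
  obtain rfl := (hdart _ _).1 hda
  obtain rfl := (hdart _ _).1 hdb
  obtain ⟨k, hk, hkb, hfirst⟩ := faceStep_next_outerEnd u w e a _ hnext
  exact ⟨k, hk, hkb, fun j hj hjk l hl => hfirst j hj hjk l ((hdart _ _).1 hl)⟩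

/-- Every mixed door (some but not all tunnels directed), in every
planar embedding, can planarly simulate some fully directed door that is not the
Case-8 OTtocC door. -/
theorem mixed_door_planarly_simulates_a_directed_door_not_case8
    (dO dT dC : Bool)
    (hdir : dO = true ∨ dT = true ∨ dC = true)
    (hundir : dO = false ∨ dT = false ∨ dC = false)
    (c : List DoorLoc) (h1 : c.Nodup) (h2 : ∀ l, l ∈ c) :
    ∃ (c' : List DoorLoc) (h1' : c'.Nodup) (h2' : ∀ l, l ∈ c'),
      ¬ CycEquiv case8Cyc c' ∧
      PlanarlySimulates (mkPG (⟨doorTrav dO dT dC, c, h1, h2⟩ : PGData Bool DoorLoc))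
        (mkPG (⟨doorTrav true true true, c', h1', h2'⟩ : PGData Bool DoorLoc)) := by
  obtain ⟨u, hu⟩ := (exists_isDirected_eq_iff dO dT dC true).2 hdir
  by_cases hc8 : CycEquiv case8Cyc c
  · obtain ⟨t, ht⟩ := (exists_isDirected_eq_iff dO dT dC false).2 hundir
    exact ⟨_, h1.map (flipEnds (some t)).injective,
      fun l => List.mem_map.2 ⟨_, h2 _, flipEnds_flipEnds _ l⟩,
      not_cycEquiv_case8Cyc_map_flipEnds hc8 t,
      planarlySimulates_directed_door_map_flipEnds hu (w := some t)
        (by rintro _ ⟨⟩; exact ht) rfl⟩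
  · exact ⟨c, h1, h2, hc8,
      planarlySimulates_directed_door_map_flipEnds hu (w := none) (by simp) (by simp [flipEnds])⟩
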